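/- Let J_n be an irreducible Markov chain on finite state space X = {0,...,m} and let X_n be sojourn times with E_i[X_1^d · 1(J_1 = j)] < ∞ for all i, j ∈ X. Then the d-th moment of the accumulated reward W_0 = Σ_{n=1}^{U_0} X_n up to the first hitting time U_0 of state 0 is finite: E_i[W_0^d] < ∞ for all i ∈ X. -/

import Mathlib

/-!
Bound the reward by the series `W₀ ≤ ∑ₙ 1{J₁, …, Jₙ ≠ 0} Xₙ₊₁`. By the Markov property at time
`n`, the `d`-th moment of the `n`-th summand is at most `C · Pᵢ(J₁, …, Jₙ ≠ 0)`, where `C` bounds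
the one-step moments `E_j[X₁ᵈ]`. The same Markov property makes the worst-case survival
probability `maxⱼ Pⱼ(J₁, …, Jₙ ≠ 0)` submultiplicative in `n`, and irreducibility makes it `< 1`
for some `N`, so it decays geometrically. Minkowski's inequality in `L^d` then bounds `‖W₀‖_d` by
a convergent series.
-/

open MeasureTheory ENNReal

/-- Prepend one step to a trajectory of a Markov renewal process. The path `ω` encodes
`ω n = (J_{n+1}, X_{n+1})`. -/
def consStep {X : Type*} (q : X × ℝ) (ω : ℕ → X × ℝ) : ℕ → X × ℝ
  | 0 => q
  | n + 1 => ω n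

/-- Accumulated reward `W₀ = ∑_{n=1}^{U₀} X_n` up to the first hitting time
`U₀ = min{n ≥ 1 : J_n = 0}` (in the path encoding `ω n = (J_{n+1}, X_{n+1})`). -/
noncomputable def hitReward {X : Type*} [Zero X] (ω : ℕ → X × ℝ) : ℝ :=
  ∑ n ∈ Finset.range (sInf {n | (ω n).1 = 0} + 1), (ω n).2

namespace ENNReal

theorem tsum_pow_div_eq (N : ℕ) [NeZero N] (r : ℝ≥0∞) :
    ∑' n : ℕ, r ^ (n / N) = N * (1 - r)⁻¹ := by
  have hdiv : ∀ (k : ℕ) (i : Fin N), (k * N + i) / N = k := fun k i => by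
    rw [Nat.add_comm, Nat.add_mul_div_right _ _ (NeZero.pos N), Nat.div_eq_of_lt i.2, zero_add]
  rw [← (Nat.divModEquiv N).symm.tsum_eq, ENNReal.tsum_prod']
  simp [Nat.divModEquiv, hdiv, ENNReal.tsum_mul_left, ENNReal.tsum_geometric]

theorem tsum_rpow_ne_top_of_submultiplicative {u : ℕ → ℝ≥0∞} (hu : Antitone u) (hu0 : u 0 ≤ 1)
    (hmul : ∀ a b, u (a + b) ≤ u a * u b) {N : ℕ} (hN : 0 < N) (huN : u N < 1) {p : ℝ}
    (hp : 0 < p) : ∑' n, u n ^ p ≠ ⊤ := by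
  have : NeZero N := ⟨hN.ne'⟩
  have hpow : ∀ k, u (N * k) ≤ u N ^ k := by
    intro k
    induction k with
    | zero => simpa using hu0
    | succ k ih =>
      calc u (N * (k + 1)) = u (N * k + N) := by rw [Nat.mul_succ]
        _ ≤ u N ^ k * u N := (hmul _ _).trans (by gcongr)
        _ = u N ^ (k + 1) := (pow_succ _ _).symm
  have hle : ∀ n, u n ^ p ≤ (u N ^ p) ^ (n / N) := fun n =>
    calc u n ^ p ≤ (u N ^ (n / N)) ^ p :=
          rpow_le_rpow ((hu (Nat.mul_div_le n N)).trans (hpow _)) hp.le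
      _ = (u N ^ p) ^ (n / N) := by
          rw [← rpow_natCast, ← rpow_natCast, ← rpow_mul, ← rpow_mul, mul_comm]
  refine ne_top_of_le_ne_top ?_ (ENNReal.tsum_le_tsum hle)
  rw [tsum_pow_div_eq]
  exact mul_ne_top (natCast_ne_top N) (inv_ne_top.2 (tsub_pos_of_lt (rpow_lt_one huN hp)).ne')

variable {α : Type*} [MeasurableSpace α] {μ : Measure α} {p : ℝ}

theorem lintegral_Lp_finset_sum_le {ι : Type*} {f : ι → α → ℝ≥0∞} (s : Finset ι)
    (hf : ∀ i, AEMeasurable (f i) μ) (hp : 1 ≤ p) :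
    (∫⁻ a, (∑ i ∈ s, f i a) ^ p ∂μ) ^ (1 / p) ≤ ∑ i ∈ s, (∫⁻ a, f i a ^ p ∂μ) ^ (1 / p) := by
  classical
  have hp0 : 0 < p := by linarith
  induction s using Finset.induction_on with
  | empty => simp [zero_rpow_of_pos hp0, hp0]
  | insert b s hb ih =>
    simp only [Finset.sum_insert hb]
    exact (lintegral_Lp_add_le (hf b) (Finset.aemeasurable_fun_sum s fun i _ => hf i) hp).trans
      (by gcongr)

theorem lintegral_Lp_tsum_le {f : ℕ → α → ℝ≥0∞} (hf : ∀ n, Measurable (f n)) (hp : 1 ≤ p) :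
    (∫⁻ a, (∑' n, f n a) ^ p ∂μ) ^ (1 / p) ≤ ∑' n, (∫⁻ a, f n a ^ p ∂μ) ^ (1 / p) := by
  have hp0 : 0 < p := by linarith
  rw [one_div, rpow_inv_le_iff hp0]
  have hsup : ∀ a, (∑' n, f n a) ^ p = ⨆ K, (∑ n ∈ Finset.range K, f n a) ^ p := fun a => by
    rw [ENNReal.tsum_eq_iSup_nat]
    exact (orderIsoRpow p hp0).map_iSup _
  simp_rw [hsup]
  rw [lintegral_iSup (fun K => (Finset.measurable_sum _ fun n _ => hf n).pow_const p)
    fun K K' hKK' a => rpow_le_rpow (Finset.sum_le_sum_of_subset (by simpa using hKK')) hp0.le]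
  refine iSup_le fun K => ?_
  rw [← rpow_inv_le_iff hp0, ← one_div]
  exact (lintegral_Lp_finset_sum_le _ (fun n => (hf n).aemeasurable) hp).trans
    (ENNReal.sum_le_tsum _)

theorem lintegral_tsum_rpow_ne_top {f : ℕ → α → ℝ≥0∞} (hf : ∀ n, Measurable (f n)) (hp : 1 ≤ p)
    (h : ∑' n, (∫⁻ a, f n a ^ p ∂μ) ^ (1 / p) ≠ ⊤) : ∫⁻ a, (∑' n, f n a) ^ p ∂μ ≠ ⊤ := by
  intro htop
  have := lintegral_Lp_tsum_le (μ := μ) hf hp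
  rw [htop, top_rpow_of_pos (by positivity)] at this
  exact h (top_le_iff.1 this)

end ENNReal

theorem Matrix.pow_apply_ne_zero_of_map_toReal {S : Type*} [Fintype S] [DecidableEq S]
    {M : Matrix S S ℝ≥0∞} (hM : ∀ i j, M i j ≠ ⊤) {n : ℕ} {i j : S}
    (h : 0 < (M.map ENNReal.toReal ^ n) i j) : (M ^ n) i j ≠ 0 := by
  set M' := M.map ENNReal.toNNReal
  have hreal : M.map ENNReal.toReal = NNReal.toRealHom.mapMatrix M' := by
    ext; simp [M', ENNReal.coe_toNNReal_eq_toReal]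
  have hennreal : M = ENNReal.ofNNRealHom.mapMatrix M' := by
    ext i j; exact (ENNReal.coe_toNNReal (hM i j)).symm
  rw [hreal, ← map_pow, RingHom.mapMatrix_apply, Matrix.map_apply] at h
  rw [hennreal, ← map_pow, RingHom.mapMatrix_apply, Matrix.map_apply]
  simpa [pos_iff_ne_zero] using h

section MarkovRenewal

variable {S : Type*} [MeasurableSpace S]

theorem measurable_consStep_uncurry :
    Measurable fun p : (S × ℝ) × (ℕ → S × ℝ) => consStep p.1 p.2 := by
  refine measurable_pi_lambda _ fun n => ?_
  cases n with
  | zero => exact measurable_fst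
  | succ k => exact (measurable_pi_apply k).comp measurable_snd

theorem measurable_consStep (q : S × ℝ) : Measurable (consStep q) :=
  measurable_consStep_uncurry.comp measurable_prodMk_left

/-- `μ i` is the law of the path `(J_{n+1}, X_{n+1})_n` of a Markov renewal process with
semi-Markov kernel `Q` started at `J₀ = i`. -/
def IsMarkovRenewalLaw (Q : S → Measure (S × ℝ)) (μ : S → Measure (ℕ → S × ℝ)) : Prop :=
  ∀ i A, MeasurableSet A → μ i A = ∫⁻ q, μ q.1 {ω | consStep q ω ∈ A} ∂Q i

def jumpMatrix (Q : S → Measure (S × ℝ)) : Matrix S S ℝ≥0∞ :=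
  Matrix.of fun i j => Q i {q | q.1 = j}

/-- The paths with `J₁, …, Jₙ ≠ a`. -/
def noVisitBefore (a : S) (n : ℕ) : Set (ℕ → S × ℝ) :=
  {ω | ∀ k < n, (ω k).1 ≠ a}

/-- Chung's taboo transition operator: one step of the chain killed on entering `a`. -/
noncomputable def tabooStep (Q : S → Measure (S × ℝ)) (a : S) (g : S → ℝ≥0∞) (i : S) : ℝ≥0∞ :=
  ∫⁻ q, ({a}ᶜ : Set S).indicator g q.1 ∂Q i

variable [DiscreteMeasurableSpace S]

theorem lintegral_comp_fst_eq_sum [Fintype S] {β : Type*} [MeasurableSpace β]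
    (ν : Measure (S × β)) (g : S → ℝ≥0∞) :
    ∫⁻ q, g q.1 ∂ν = ∑ l, ν {q | q.1 = l} * g l := by
  rw [← lintegral_map Measurable.of_discrete measurable_fst, lintegral_fintype]
  refine Finset.sum_congr rfl fun l _ => ?_
  rw [Measure.map_apply measurable_fst (measurableSet_singleton l), mul_comm]
  rfl

theorem lintegral_eq_sum_setLIntegral_fst [Fintype S] {β : Type*} [MeasurableSpace β]
    (ν : Measure (S × β)) (h : S × β → ℝ≥0∞) :
    ∫⁻ q, h q ∂ν = ∑ l, ∫⁻ q in {q | q.1 = l}, h q ∂ν := by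
  have hunion : (⋃ l : S, {q : S × β | q.1 = l}) = Set.univ := by ext q; simp
  have hdisj : Pairwise (Function.onFun Disjoint fun l : S => {q : S × β | q.1 = l}) :=
    fun k l hkl => Set.disjoint_left.2 fun q hk hl => hkl (hk.symm.trans hl)
  rw [← setLIntegral_univ, ← hunion,
    lintegral_iUnion (s := fun l : S => {q : S × β | q.1 = l})
      (fun l => measurable_fst (measurableSet_singleton l)) hdisj, tsum_fintype]

variable {Q : S → Measure (S × ℝ)} {a : S}

theorem measurableSet_noVisitBefore (a : S) (n : ℕ) : MeasurableSet (noVisitBefore a n) := by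
  simp only [noVisitBefore, Set.ofPred_forall]
  exact MeasurableSet.iInter fun k => MeasurableSet.iInter fun _ =>
    (measurable_fst.comp (measurable_pi_apply k)) (measurableSet_singleton a).compl

omit [MeasurableSpace S] [DiscreteMeasurableSpace S] in
@[simp]
theorem noVisitBefore_zero (a : S) : noVisitBefore a 0 = Set.univ := by
  simp [noVisitBefore]

omit [MeasurableSpace S] [DiscreteMeasurableSpace S] in
theorem noVisitBefore_antitone (a : S) : Antitone (noVisitBefore a) :=
  fun _ _ hmn _ hω k hk => hω k (hk.trans_le hmn)

omit [MeasurableSpace S] [DiscreteMeasurableSpace S] in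
theorem consStep_mem_noVisitBefore_succ (q : S × ℝ) (ω : ℕ → S × ℝ) (n : ℕ) :
    consStep q ω ∈ noVisitBefore a (n + 1) ↔ q.1 ≠ a ∧ ω ∈ noVisitBefore a n := by
  refine ⟨fun h => ⟨h 0 n.succ_pos, fun k hk => h (k + 1) (Nat.succ_lt_succ hk)⟩, ?_⟩
  rintro ⟨hq, hω⟩ (_ | k) hk
  exacts [hq, hω k (Nat.lt_of_succ_lt_succ hk)]

omit [MeasurableSpace S] [DiscreteMeasurableSpace S] in
theorem indicator_noVisitBefore_succ_consStep {M : Type*} [Zero M] (g : S × ℝ → M) (n : ℕ)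
    (q : S × ℝ) (ω : ℕ → S × ℝ) :
    (noVisitBefore a (n + 1)).indicator (fun ω => g (ω (n + 1))) (consStep q ω) =
      ({a}ᶜ : Set S).indicator
        (fun _ => (noVisitBefore a n).indicator (fun ω => g (ω n)) ω) q.1 := by
  by_cases hq : q.1 = a <;> by_cases hω : ω ∈ noVisitBefore a n <;>
    simp [consStep_mem_noVisitBefore_succ, hq, hω, consStep]

omit [DiscreteMeasurableSpace S] in
theorem tabooStep_mono : Monotone (tabooStep Q a) := fun _ _ hg _ =>
  lintegral_mono fun q => Set.indicator_le_indicator (hg q.1)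

theorem tabooStep_smul (c : ℝ≥0∞) (g : S → ℝ≥0∞) :
    tabooStep Q a (c • g) = c • tabooStep Q a g := by
  funext i
  simp only [tabooStep, Pi.smul_apply, smul_eq_mul]
  have hmeas : Measurable fun q : S × ℝ => ({a}ᶜ : Set S).indicator g q.1 :=
    (Measurable.of_discrete (f := ({a}ᶜ : Set S).indicator g)).comp measurable_fst
  rw [← lintegral_const_mul c hmeas]
  exact lintegral_congr fun q => Set.indicator_const_smul_apply _ c g q.1

theorem iterate_tabooStep_le {g : S → ℝ≥0∞} {c : ℝ≥0∞} (hg : ∀ j, g j ≤ c) (n : ℕ) :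
    (tabooStep Q a)^[n] g ≤ c • (tabooStep Q a)^[n] 1 := by
  induction n with
  | zero => exact fun j => by simpa using hg j
  | succ n ih =>
    simp only [Function.iterate_succ_apply', ← tabooStep_smul]
    exact tabooStep_mono ih

theorem exists_jumpMatrix_pow_succ_ne_zero [Fintype S] [DecidableEq S]
    [∀ i, IsProbabilityMeasure (Q i)] (hirr : ∀ i j, ∃ n, (jumpMatrix Q ^ n) i j ≠ 0)
    (i j : S) : ∃ n, (jumpMatrix Q ^ (n + 1)) i j ≠ 0 := by
  obtain ⟨k, hik⟩ : ∃ k, jumpMatrix Q i k ≠ 0 := by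
    by_contra! h
    have hrow := lintegral_comp_fst_eq_sum (Q i) 1
    simp only [Pi.one_apply, lintegral_one, measure_univ, mul_one] at hrow
    exact one_ne_zero (hrow.trans (Finset.sum_eq_zero fun k _ => h k))
  obtain ⟨n, hkj⟩ := hirr k j
  refine ⟨n, ?_⟩
  rw [pow_succ', Matrix.mul_apply]
  exact (Finset.sum_eq_zero_iff.not.2 fun h => mul_ne_zero hik hkj (h k (Finset.mem_univ k)))

omit [MeasurableSpace S] in
theorem ofReal_hitReward_le_tsum [Zero S] (ω : ℕ → S × ℝ) :
    ENNReal.ofReal (hitReward ω) ≤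
      ∑' n, (noVisitBefore 0 n).indicator (fun ω => ENNReal.ofReal (ω n).2) ω := by
  set T := sInf {n | (ω n).1 = 0}
  have hmem : ∀ n ∈ Finset.range (T + 1), ω ∈ noVisitBefore 0 n := fun n hn k hk hk0 => by
    have : T ≤ k := Nat.sInf_le hk0
    simp only [Finset.mem_range] at hn
    omega
  calc ENNReal.ofReal (hitReward ω)
      ≤ ∑ n ∈ Finset.range (T + 1), ENNReal.ofReal (ω n).2 :=
        Finset.le_sum_of_subadditive _ ofReal_zero.le (fun _ _ => ofReal_add_le) _ _
    _ = ∑ n ∈ Finset.range (T + 1),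
          (noVisitBefore 0 n).indicator (fun ω => ENNReal.ofReal (ω n).2) ω :=
        Finset.sum_congr rfl fun n hn =>
          (Set.indicator_of_mem (hmem n hn) fun ω => ENNReal.ofReal (ω n).2).symm
    _ ≤ _ := ENNReal.sum_le_tsum _

namespace IsMarkovRenewalLaw

variable {μ : S → Measure (ℕ → S × ℝ)} (hμ : IsMarkovRenewalLaw Q μ)
include hμ

theorem lintegral_eq [∀ i, IsProbabilityMeasure (μ i)] (i : S)
    {f : (ℕ → S × ℝ) → ℝ≥0∞} (hf : Measurable f) :
    ∫⁻ ω, f ω ∂μ i = ∫⁻ q, ∫⁻ ω, f (consStep q ω) ∂μ q.1 ∂Q i := by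
  let κ : ProbabilityTheory.Kernel (S × ℝ) (ℕ → S × ℝ) :=
    ⟨fun q => μ q.1, Measurable.of_discrete.comp measurable_fst⟩
  have : ProbabilityTheory.IsMarkovKernel κ :=
    ⟨fun q => inferInstanceAs (IsProbabilityMeasure (μ q.1))⟩
  have hη : Measurable fun q : S × ℝ => (μ q.1).map (consStep q) := by
    refine Measure.measurable_of_measurable_coe _ fun s hs => ?_
    simp_rw [Measure.map_apply (measurable_consStep _) hs]
    exact ProbabilityTheory.Kernel.measurable_kernel_prodMk_left (κ := κ)
      (measurable_consStep_uncurry hs)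
  have hbind : μ i = (Q i).bind fun q => (μ q.1).map (consStep q) := by
    ext s hs
    rw [Measure.bind_apply hs hη.aemeasurable, hμ i s hs]
    exact lintegral_congr fun q => (Measure.map_apply (measurable_consStep q) hs).symm
  rw [hbind, Measure.lintegral_bind hη.aemeasurable hf.aemeasurable]
  exact lintegral_congr fun q => lintegral_map hf (measurable_consStep q)

theorem measure_fst_eval_eq [Fintype S] [DecidableEq S] [∀ i, IsProbabilityMeasure (μ i)]
    (n : ℕ) (i k : S) : μ i {ω | (ω n).1 = k} = (jumpMatrix Q ^ (n + 1)) i k := by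
  have hmeas : ∀ n, MeasurableSet {ω : ℕ → S × ℝ | (ω n).1 = k} := fun n =>
    (measurable_fst.comp (measurable_pi_apply n)) (measurableSet_singleton k)
  induction n generalizing i with
  | zero =>
    rw [hμ i _ (hmeas 0), pow_one, jumpMatrix, Matrix.of_apply,
      ← lintegral_indicator_one (s := {q : S × ℝ | q.1 = k})
        (measurable_fst (measurableSet_singleton k))]
    refine lintegral_congr fun (q : S × ℝ) => ?_
    by_cases h : q.1 = k <;> simp [consStep, h]
  | succ n ih =>
    rw [hμ i _ (hmeas (n + 1)), pow_succ', Matrix.mul_apply]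
    exact (lintegral_congr fun q : S × ℝ => ih q.1).trans
      (lintegral_comp_fst_eq_sum (Q i) fun l => (jumpMatrix Q ^ (n + 1)) l k)

theorem measure_noVisitBefore_succ_lt_one [Fintype S] [DecidableEq S]
    [∀ i, IsProbabilityMeasure (μ i)] {n : ℕ} {i : S}
    (h : (jumpMatrix Q ^ (n + 1)) i a ≠ 0) : μ i (noVisitBefore a (n + 1)) < 1 := by
  have hdisj : Disjoint (noVisitBefore a (n + 1)) {ω | (ω n).1 = a} :=
    Set.disjoint_left.2 fun ω hω hωa => hω n n.lt_succ_self hωa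
  have hle : μ i (noVisitBefore a (n + 1)) + μ i {ω | (ω n).1 = a} ≤ 1 := by
    rw [← measure_union hdisj ((measurable_fst.comp (measurable_pi_apply n))
      (measurableSet_singleton a))]
    exact prob_le_one
  rw [hμ.measure_fst_eval_eq] at hle
  exact (ENNReal.lt_add_right (measure_ne_top _ _) h).trans_le hle

theorem setLIntegral_noVisitBefore [∀ i, IsProbabilityMeasure (μ i)] (a : S)
    {h : S × ℝ → ℝ≥0∞} (hh : Measurable h) (n : ℕ) (i : S) :
    ∫⁻ ω in noVisitBefore a n, h (ω n) ∂μ i =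
      (tabooStep Q a)^[n] (fun j => ∫⁻ q, h q ∂Q j) i := by
  have hmeas : ∀ n, Measurable fun ω : ℕ → S × ℝ => h (ω n) := fun n =>
    hh.comp (measurable_pi_apply n)
  induction n generalizing i with
  | zero => simp [hμ.lintegral_eq i (hmeas 0), consStep]
  | succ n ih =>
    rw [Function.iterate_succ_apply', tabooStep,
      ← lintegral_indicator (measurableSet_noVisitBefore a (n + 1)),
      hμ.lintegral_eq i ((hmeas (n + 1)).indicator (measurableSet_noVisitBefore a (n + 1)))]
    refine lintegral_congr fun q => ?_
    simp_rw [indicator_noVisitBefore_succ_consStep]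
    by_cases hq : q.1 = a
    · simp [hq]
    · simp [hq, lintegral_indicator (measurableSet_noVisitBefore a n), ← ih]

variable [∀ i, IsProbabilityMeasure (Q i)] [∀ i, IsProbabilityMeasure (μ i)]

theorem measure_noVisitBefore (a : S) (n : ℕ) (i : S) :
    μ i (noVisitBefore a n) = (tabooStep Q a)^[n] 1 i := by
  have := hμ.setLIntegral_noVisitBefore a (h := fun _ => 1) measurable_const n i
  rwa [setLIntegral_one, funext fun j => lintegral_one.trans measure_univ] at this

theorem setLIntegral_noVisitBefore_le (a : S) {h : S × ℝ → ℝ≥0∞} (hh : Measurable h)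
    {c : ℝ≥0∞} (hc : ∀ j, ∫⁻ q, h q ∂Q j ≤ c) (n : ℕ) (i : S) :
    ∫⁻ ω in noVisitBefore a n, h (ω n) ∂μ i ≤ c * μ i (noVisitBefore a n) := by
  rw [hμ.setLIntegral_noVisitBefore a hh, hμ.measure_noVisitBefore]
  exact iterate_tabooStep_le hc n i

theorem measure_noVisitBefore_add_le (a : S) {n : ℕ} {c : ℝ≥0∞}
    (hc : ∀ j, μ j (noVisitBefore a n) ≤ c) (b : ℕ) (i : S) :
    μ i (noVisitBefore a (b + n)) ≤ c * μ i (noVisitBefore a b) := by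
  simp only [hμ.measure_noVisitBefore] at hc ⊢
  rw [Function.iterate_add_apply]
  exact iterate_tabooStep_le hc b i

variable [Fintype S]

theorem exists_forall_measure_noVisitBefore_lt_one [DecidableEq S]
    (hirr : ∀ i j, ∃ n, (jumpMatrix Q ^ n) i j ≠ 0) (a : S) :
    ∃ N, 0 < N ∧ ∀ i, μ i (noVisitBefore a N) < 1 := by
  choose n hn using fun i => exists_jumpMatrix_pow_succ_ne_zero hirr i a
  refine ⟨Finset.univ.sup n + 1, Nat.succ_pos _, fun i => ?_⟩
  refine lt_of_le_of_lt ?_ (hμ.measure_noVisitBefore_succ_lt_one (hn i))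
  exact measure_mono
    (noVisitBefore_antitone a (by gcongr; exact Finset.le_sup (Finset.mem_univ i)))

theorem tsum_measure_noVisitBefore_rpow_ne_top {N : ℕ} (hN : 0 < N)
    (hlt : ∀ i, μ i (noVisitBefore a N) < 1) {p : ℝ} (hp : 0 < p) (i : S) :
    ∑' n, μ i (noVisitBefore a n) ^ p ≠ ⊤ := by
  set u : ℕ → ℝ≥0∞ := fun n => Finset.univ.sup fun j => μ j (noVisitBefore a n)
  have hle : ∀ n j, μ j (noVisitBefore a n) ≤ u n := fun n j =>
    Finset.le_sup (f := fun j => μ j (noVisitBefore a n)) (Finset.mem_univ j)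
  have hu : Antitone u := fun m n hmn =>
    Finset.sup_mono_fun fun j _ => measure_mono (noVisitBefore_antitone a hmn)
  have hmul : ∀ b n, u (b + n) ≤ u b * u n := fun b n => Finset.sup_le fun j _ => by
    rw [mul_comm]
    exact (hμ.measure_noVisitBefore_add_le a (hle n) b j).trans (by gcongr; exact hle b j)
  have huN : u N < 1 := (Finset.sup_lt_iff one_pos).2 fun j _ => hlt j
  have hu0 : u 0 ≤ 1 := Finset.sup_le fun _ _ => prob_le_one
  exact ne_top_of_le_ne_top (tsum_rpow_ne_top_of_submultiplicative hu hu0 hmul hN huN hp)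
    (ENNReal.tsum_le_tsum fun n => rpow_le_rpow (hle n i) hp.le)

theorem lintegral_indicator_noVisitBefore_pow_le {d : ℕ} (hd : d ≠ 0) (n : ℕ) (i : S) :
    ∫⁻ ω, (noVisitBefore a n).indicator (fun ω => ENNReal.ofReal (ω n).2) ω ^ d ∂μ i ≤
      (∑ j, ∫⁻ q, ENNReal.ofReal q.2 ^ d ∂Q j) * μ i (noVisitBefore a n) := by
  have hpow : ∀ ω, (noVisitBefore a n).indicator (fun ω => ENNReal.ofReal (ω n).2) ω ^ d =
      (noVisitBefore a n).indicator (fun ω => ENNReal.ofReal (ω n).2 ^ d) ω := fun ω =>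
    (congrFun (Set.indicator_comp_of_zero (g := fun x : ℝ≥0∞ => x ^ d) (zero_pow hd)) ω).symm
  rw [lintegral_congr hpow, lintegral_indicator (measurableSet_noVisitBefore a n)]
  exact hμ.setLIntegral_noVisitBefore_le a (measurable_snd.ennreal_ofReal.pow_const d)
    (fun j => Finset.single_le_sum (f := fun j => ∫⁻ q, ENNReal.ofReal q.2 ^ d ∂Q j)
      (fun _ _ => zero_le) (Finset.mem_univ j)) n i

theorem lintegral_ofReal_hitReward_pow_ne_top [Zero S] {d : ℕ}
    (hmom : ∀ j, ∫⁻ q, ENNReal.ofReal q.2 ^ d ∂Q j ≠ ⊤) {N : ℕ} (hN : 0 < N)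
    (hlt : ∀ i, μ i (noVisitBefore 0 N) < 1) (i : S) :
    ∫⁻ ω, ENNReal.ofReal (hitReward ω) ^ d ∂μ i ≠ ⊤ := by
  rcases Nat.eq_zero_or_pos d with rfl | hd
  · simp
  set f : ℕ → (ℕ → S × ℝ) → ℝ≥0∞ := fun n =>
    (noVisitBefore 0 n).indicator fun ω => ENNReal.ofReal (ω n).2
  set c := ∑ j, ∫⁻ q, ENNReal.ofReal q.2 ^ d ∂Q j
  have hc : c ≠ ⊤ := ENNReal.sum_ne_top.2 fun j _ => hmom j
  have hf : ∀ n, Measurable (f n) := fun n =>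
    (measurable_snd.ennreal_ofReal.comp (measurable_pi_apply n)).indicator
      (measurableSet_noVisitBefore 0 n)
  have hle : ∀ n, (∫⁻ ω, f n ω ^ (d : ℝ) ∂μ i) ^ (1 / (d : ℝ)) ≤
      c ^ (1 / (d : ℝ)) * μ i (noVisitBefore 0 n) ^ (1 / (d : ℝ)) := fun n => by
    rw [← mul_rpow_of_nonneg _ _ (by positivity)]
    simp only [rpow_natCast]
    exact rpow_le_rpow (hμ.lintegral_indicator_noVisitBefore_pow_le hd.ne' n i) (by positivity)
  have hsum : ∑' n, (∫⁻ ω, f n ω ^ (d : ℝ) ∂μ i) ^ (1 / (d : ℝ)) ≠ ⊤ := by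
    refine ne_top_of_le_ne_top ?_ (ENNReal.tsum_le_tsum hle)
    rw [ENNReal.tsum_mul_left]
    exact mul_ne_top (rpow_ne_top_of_nonneg (by positivity) hc)
      (hμ.tsum_measure_noVisitBefore_rpow_ne_top hN hlt (by positivity) i)
  refine ne_top_of_le_ne_top (lintegral_tsum_rpow_ne_top hf (Nat.one_le_cast.2 hd) hsum)
    (lintegral_mono fun ω => ?_)
  rw [rpow_natCast]
  gcongr
  exact ofReal_hitReward_le_tsum ω

end IsMarkovRenewalLaw

end MarkovRenewal

theorem dth_moment_hitting_reward_finite_general {m : ℕ} (d : ℕ)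
    (Q : Fin (m + 1) → Measure (Fin (m + 1) × ℝ))
    (hQ : ∀ i, IsProbabilityMeasure (Q i))
    (hirr : ∀ i j : Fin (m + 1), ∃ n,
      0 < ((Matrix.of fun i j => (Q i {q | q.1 = j}).toReal) ^ n) i j)
    (hmom : ∀ i j, ∫⁻ q in {q | q.1 = j}, (ENNReal.ofReal q.2) ^ d ∂ Q i ≠ ⊤)
    (μ : Fin (m + 1) → Measure (ℕ → Fin (m + 1) × ℝ))
    (hprob : ∀ i, IsProbabilityMeasure (μ i))
    (hMRP : ∀ (i : Fin (m + 1)) (A : Set (ℕ → Fin (m + 1) × ℝ)), MeasurableSet A →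
      μ i A = ∫⁻ q, μ q.1 {ω | consStep q ω ∈ A} ∂ Q i) :
    ∀ i, ∫⁻ ω, ENNReal.ofReal (hitReward ω) ^ d ∂ μ i ≠ ⊤ := by
  have hμ : IsMarkovRenewalLaw Q μ := hMRP
  have hirr' : ∀ i j, ∃ n, (jumpMatrix Q ^ n) i j ≠ 0 := fun i j =>
    (hirr i j).imp fun _ => Matrix.pow_apply_ne_zero_of_map_toReal fun _ _ => measure_ne_top _ _
  obtain ⟨N, hN, hlt⟩ := hμ.exists_forall_measure_noVisitBefore_lt_one hirr' 0
  refine hμ.lintegral_ofReal_hitReward_pow_ne_top (fun j => ?_) hN hlt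
  rw [lintegral_eq_sum_setLIntegral_fst]
  exact ENNReal.sum_ne_top.2 fun k _ => hmom j k

/-- For an irreducible Markov renewal process with nonnegative sojourn times
and `E_i[X₁^d 1(J₁ = j)] < ∞` for all `i, j`, the `d`-th moment of the accumulated reward
`W₀` up to the first hitting time of `0` is finite: `E_i[W₀^d] < ∞` for all `i`. -/
theorem dth_moment_hitting_reward_finite {m : ℕ} (d : ℕ)
    (Q : Fin (m + 1) → Measure (Fin (m + 1) × ℝ))
    (hQ : ∀ i, IsProbabilityMeasure (Q i))
    (hQpos : ∀ i, Q i {q | q.2 < 0} = 0)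
    (hirr : ∀ i j : Fin (m + 1), ∃ n,
      0 < ((Matrix.of fun i j => (Q i {q | q.1 = j}).toReal) ^ n) i j)
    (hmom : ∀ i j, ∫⁻ q in {q | q.1 = j}, (ENNReal.ofReal q.2) ^ d ∂ Q i ≠ ⊤)
    (μ : Fin (m + 1) → Measure (ℕ → Fin (m + 1) × ℝ))
    (hprob : ∀ i, IsProbabilityMeasure (μ i))
    (hMRP : ∀ (i : Fin (m + 1)) (A : Set (ℕ → Fin (m + 1) × ℝ)), MeasurableSet A →
      μ i A = ∫⁻ q, μ q.1 {ω | consStep q ω ∈ A} ∂ Q i) :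
    ∀ i, ∫⁻ ω, ENNReal.ofReal (hitReward ω) ^ d ∂ μ i ≠ ⊤ :=
  dth_moment_hitting_reward_finite_general d Q hQ hirr hmom μ hprob hMRP
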